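/- arXiv:2004.12295 — 3 statements merged into one kernel-verified Lean document; each statement's English description precedes it below -/
import Mathlib

section
/- For positive definite symmetric matrices A, B in R^{n×n} and t ∈ [0,1], log det((1-t)A + tB) ≥ (1-t) log det A + t log det B + (1/2) t(1-t) ‖A - B‖_HS² / max{λ_A², λ_B²}, where λ_A, λ_B are the maximal eigenvalues of A, B and ‖·‖_HS is the Hilbert–Schmidt (Frobenius) norm. -/
/-!
Write `A = W Wᵀ` and `B = W diag(μ) Wᵀ` (simultaneous diagonalization), so that
`(1 - t) A + t B = W diag(p(t)) Wᵀ` with `pᵢ(t) = 1 - t + t μᵢ` and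
`log det ((1 - t) A + t B) = log det A + ∑ᵢ log pᵢ(t)`. The second derivative of this function of
`t` is `-∑ᵢ ((1 - μᵢ) / pᵢ(t))²`, so it suffices to bound `‖A - B‖²_HS` by `λ²` times that sum,
where `λ = max λ_A λ_B`. With `a = Wᵀ W` one has `‖A - B‖²_HS = ∑ᵢⱼ (1 - μᵢ)(1 - μⱼ) aᵢⱼ²`,
and `W diag(p) Wᵀ ≤ λ` gives `a diag(p) a ≤ λ a`, i.e. `∑ⱼ pⱼ aᵢⱼ² ≤ λ aᵢᵢ` (hence also
`pᵢ aᵢᵢ ≤ λ`); AM-GM on the cross terms finishes the bound.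
-/

open Matrix Finset Set Real
open scoped MatrixOrder

theorem one_sub_add_mul_pos {t μ : ℝ} (ht : t ∈ Icc (0:ℝ) 1) (hμ : 0 < μ) :
    0 < 1 - t + t * μ := by
  rcases eq_or_lt_of_le ht.2 with rfl | h
  · simpa using hμ
  · nlinarith [mul_nonneg ht.1 hμ.le]

theorem chord_add_le_of_hasDerivAt2_le_neg {f f' f'' : ℝ → ℝ} {c : ℝ}
    (hf : ContinuousOn f (Icc 0 1))
    (hf' : ∀ x ∈ Ioo (0:ℝ) 1, HasDerivAt f (f' x) x)
    (hf'' : ∀ x ∈ Ioo (0:ℝ) 1, HasDerivAt f' (f'' x) x)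
    (hc : ∀ x ∈ Ioo (0:ℝ) 1, f'' x ≤ -c) {t : ℝ} (ht : t ∈ Icc (0:ℝ) 1) :
    (1 - t) * f 0 + t * f 1 + c / 2 * t * (1 - t) ≤ f t := by
  have hconc : ConcaveOn ℝ (Icc 0 1) fun x => f x + c / 2 * x ^ 2 := by
    refine concaveOn_of_hasDerivWithinAt2_nonpos (f' := fun x => f' x + c * x)
      (f'' := fun x => f'' x + c) (convex_Icc 0 1) (by fun_prop) (fun x hx => ?_)
      (fun x hx => ?_) (fun x hx => ?_) <;> rw [interior_Icc] at hx
    · exact ((hf' x hx).add ((hasDerivAt_pow 2 x).const_mul (c / 2))).hasDerivWithinAt.congr_deriv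
        (by ring)
    · exact ((hf'' x hx).add ((hasDerivAt_id x).const_mul c)).hasDerivWithinAt.congr_deriv
        (by simp)
    · linarith [hc x hx]
  have := hconc.2 (left_mem_Icc.2 zero_le_one) (right_mem_Icc.2 zero_le_one)
    (sub_nonneg.2 ht.2) ht.1 (by ring)
  simp only [smul_eq_mul] at this
  ring_nf at this ⊢
  linarith

theorem Matrix.smul_add_smul_le_smul_one {ι : Type*} [DecidableEq ι] {A B : Matrix ι ι ℝ}
    {l s : ℝ} (hA : A ≤ l • 1) (hB : B ≤ l • 1) (hs : s ∈ Icc (0:ℝ) 1) :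
    (1 - s) • A + s • B ≤ l • 1 := by
  rw [Matrix.le_iff] at *
  have e : l • 1 - ((1 - s) • A + s • B) = (1 - s) • (l • 1 - A) + s • (l • 1 - B) := by module
  rw [e]
  exact (hA.smul (sub_nonneg.2 hs.2)).add (hB.smul hs.1)

section

variable {ι : Type*} [Fintype ι]

theorem mul_sum_log_add_le_sum_log {μ : ι → ℝ} (hμ : ∀ i, 0 < μ i) {c : ℝ}
    (hc : ∀ s ∈ Ioo (0:ℝ) 1, c ≤ ∑ i, ((1 - μ i) / (1 - s + s * μ i)) ^ 2)
    {t : ℝ} (ht : t ∈ Icc (0:ℝ) 1) :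
    t * ∑ i, log (μ i) + c / 2 * t * (1 - t) ≤ ∑ i, log (1 - t + t * μ i) := by
  have hpos : ∀ s ∈ Icc (0:ℝ) 1, ∀ i, 1 - s + s * μ i ≠ 0 := fun s hs i =>
    (one_sub_add_mul_pos hs (hμ i)).ne'
  have hp : ∀ s i, HasDerivAt (fun s => 1 - s + s * μ i) (μ i - 1) s := fun s i =>
    (((hasDerivAt_id s).const_sub 1).add ((hasDerivAt_id s).mul_const (μ i))).congr_deriv
      (by simp; ring)
  have := chord_add_le_of_hasDerivAt2_le_neg (f := fun s => ∑ i, log (1 - s + s * μ i))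
    (f' := fun s => ∑ i, (μ i - 1) / (1 - s + s * μ i))
    (f'' := fun s => -∑ i, ((1 - μ i) / (1 - s + s * μ i)) ^ 2) (c := c) ?_ ?_ ?_ ?_ ht
  · simpa using this
  · exact continuousOn_finsetSum _ fun i _ =>
      ContinuousOn.log (by fun_prop) fun s hs => hpos s hs i
  · intro s hs
    exact HasDerivAt.fun_sum fun i _ => (hp s i).log (hpos s (Ioo_subset_Icc_self hs) i)
  · intro s hs
    refine (HasDerivAt.fun_sum fun i _ => (hasDerivAt_const s (μ i - 1)).div (hp s i)
      (hpos s (Ioo_subset_Icc_self hs) i)).congr_deriv ?_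
    rw [← sum_neg_distrib]
    refine sum_congr rfl fun i _ => ?_
    rw [div_pow]
    ring
  · exact fun s hs => neg_le_neg (hc s hs)

theorem Matrix.IsSymm.sum_mul_mul_sq_le {a : Matrix ι ι ℝ} (ha : a.IsSymm) {p : ι → ℝ}
    (hp : ∀ i, 0 < p i) {l : ℝ} (hrow : ∀ i, ∑ j, p j * a i j ^ 2 ≤ l * a i i) (ν : ι → ℝ) :
    ∑ i, ∑ j, ν i * ν j * a i j ^ 2 ≤ l ^ 2 * ∑ i, (ν i / p i) ^ 2 := by
  have hdiag : ∀ i, l * a i i ≤ l ^ 2 / p i := fun i => by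
    have h := (single_le_sum (f := fun j => p j * a i j ^ 2)
      (fun j _ => by have := hp j; positivity) (mem_univ i)).trans (hrow i)
    rw [le_div_iff₀ (hp i)]
    nlinarith [sq_nonneg (p i * a i i - l), hp i]
  have hamgm : ∀ i j, ν i * ν j * a i j ^ 2 ≤
      (ν i ^ 2 / p i * (p j * a i j ^ 2) + ν j ^ 2 / p j * (p i * a j i ^ 2)) / 2 :=
    fun i j => by
    have hi := hp i
    have hj := hp j
    rw [ha.apply i j, div_mul_eq_mul_div, div_mul_eq_mul_div, div_add_div _ _ hi.ne' hj.ne',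
      div_div, le_div_iff₀ (by positivity)]
    nlinarith [mul_nonneg (sq_nonneg (ν i * p j - ν j * p i)) (sq_nonneg (a i j))]
  calc ∑ i, ∑ j, ν i * ν j * a i j ^ 2
      ≤ ∑ i, ∑ j, (ν i ^ 2 / p i * (p j * a i j ^ 2) + ν j ^ 2 / p j * (p i * a j i ^ 2)) / 2 :=
        sum_le_sum fun i _ => sum_le_sum fun j _ => hamgm i j
    _ = ∑ i, ν i ^ 2 / p i * ∑ j, p j * a i j ^ 2 := by
        simp only [← sum_div, sum_add_distrib, mul_sum]
        rw [sum_comm (f := fun i j => ν j ^ 2 / p j * (p i * a j i ^ 2))]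
        ring
    _ ≤ ∑ i, ν i ^ 2 / p i * (l ^ 2 / p i) := by
        gcongr with i
        · have := hp i; positivity
        · exact (hrow i).trans (hdiag i)
    _ = l ^ 2 * ∑ i, (ν i / p i) ^ 2 := by
        rw [mul_sum]
        exact sum_congr rfl fun i _ => by ring

variable [DecidableEq ι]

theorem Matrix.IsHermitian.le_smul_one_of_eigenvalues_le {𝕜 : Type*} [RCLike 𝕜]
    {A : Matrix ι ι 𝕜} (hA : A.IsHermitian) {r : ℝ} (h : ∀ i, hA.eigenvalues i ≤ r) :
    A ≤ r • 1 := by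
  rw [← Algebra.algebraMap_eq_smul_one]
  refine le_algebraMap_of_spectrum_le fun x hx => ?_
  obtain ⟨i, rfl⟩ := hA.spectrum_real_eq_range_eigenvalues ▸ hx
  exact h i

theorem Matrix.PosDef.exists_orthogonal_diagonal {C : Matrix ι ι ℝ} (hC : C.PosDef) :
    ∃ (U : Matrix ι ι ℝ) (μ : ι → ℝ), (∀ i, 0 < μ i) ∧ U * Uᵀ = 1 ∧
      C = U * diagonal μ * Uᵀ := by
  refine ⟨hC.1.eigenvectorUnitary, hC.1.eigenvalues, hC.eigenvalues_pos, ?_, ?_⟩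
  · simpa [star_eq_conjTranspose] using (mem_unitaryGroup_iff).mp hC.1.eigenvectorUnitary.2
  · simpa [Function.comp_def, star_eq_conjTranspose] using hC.1.spectral_theorem

theorem Matrix.PosDef.exists_simultaneous_diagonalization {A B : Matrix ι ι ℝ}
    (hA : A.PosDef) (hB : B.PosDef) :
    ∃ (W : Matrix ι ι ℝ) (μ : ι → ℝ), (∀ i, 0 < μ i) ∧ A = W * Wᵀ ∧
      B = W * diagonal μ * Wᵀ := by
  set S := CFC.sqrt A
  have hS : S.PosDef := (hA.isStrictlyPositive.sqrt).posDef
  have hSt : Sᵀ = S := by simpa using hS.1.eq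
  have hSS : S * S⁻¹ = 1 := mul_nonsing_inv S hS.det_pos.ne'.isUnit
  have hC : (S⁻¹ * B * S⁻¹).PosDef := by
    simpa [transpose_nonsing_inv, hSt] using
      hB.conjTranspose_mul_mul_same (mulVec_injective_iff_isUnit.2 hS.inv.isUnit)
  obtain ⟨U, μ, hμ, hU, hspec⟩ := hC.exists_orthogonal_diagonal
  refine ⟨S * U, μ, hμ, ?_, ?_⟩
  · rw [transpose_mul, hSt, Matrix.mul_assoc, ← Matrix.mul_assoc U, hU, Matrix.one_mul,
      CFC.sqrt_mul_sqrt_self A hA.posSemidef.nonneg]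
  · calc B = S * (S⁻¹ * B * S⁻¹) * S := by
          simp only [← Matrix.mul_assoc, hSS, Matrix.one_mul]
          rw [Matrix.mul_assoc, nonsing_inv_mul S hS.det_pos.ne'.isUnit, Matrix.mul_one]
      _ = _ := by rw [hspec, transpose_mul, hSt]; simp only [Matrix.mul_assoc]

theorem Matrix.smul_add_smul_mul_diagonal_mul_transpose (W : Matrix ι ι ℝ) (μ : ι → ℝ)
    (s : ℝ) : (1 - s) • (W * Wᵀ) + s • (W * diagonal μ * Wᵀ)
      = W * diagonal (fun i => 1 - s + s * μ i) * Wᵀ := by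
  have : diagonal (fun i => 1 - s + s * μ i) = (1 - s) • 1 + s • diagonal μ := by
    ext i j
    by_cases h : i = j <;> simp [h]
  rw [this, Matrix.mul_add, Matrix.add_mul, Matrix.mul_smul, Matrix.smul_mul, Matrix.mul_one,
    Matrix.mul_smul, Matrix.smul_mul]

theorem Matrix.sub_mul_diagonal_mul_transpose (W : Matrix ι ι ℝ) (μ : ι → ℝ) :
    W * Wᵀ - W * diagonal μ * Wᵀ = W * diagonal (fun i => 1 - μ i) * Wᵀ := by
  have : diagonal (fun i => 1 - μ i) = 1 - diagonal μ := by
    ext i j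
    by_cases h : i = j <;> simp [h]
  rw [this, Matrix.mul_sub, Matrix.sub_mul, Matrix.mul_one]

theorem Matrix.log_det_mul_diagonal_mul_transpose {W : Matrix ι ι ℝ} {p : ι → ℝ}
    (hW : (W * Wᵀ).det ≠ 0) (hp : ∀ i, p i ≠ 0) :
    log (W * diagonal p * Wᵀ).det = log (W * Wᵀ).det + ∑ i, log (p i) := by
  have hdet : (W * diagonal p * Wᵀ).det = (W * Wᵀ).det * ∏ i, p i := by
    simp only [det_mul, det_diagonal]
    ring
  rw [hdet, log_mul hW (prod_ne_zero_iff.2 fun i _ => hp i), log_prod fun i _ => hp i]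

theorem Matrix.IsSymm.mul_diagonal_mul_self_apply {a : Matrix ι ι ℝ} (ha : a.IsSymm)
    (p : ι → ℝ) (i : ι) : (a * diagonal p * a) i i = ∑ j, p j * a i j ^ 2 := by
  rw [mul_apply]
  simp only [mul_diagonal, ha.apply i]
  exact sum_congr rfl fun j _ => by ring

theorem Matrix.trace_sq_mul_diagonal_mul_transpose (W : Matrix ι ι ℝ) (d : ι → ℝ) :
    trace ((W * diagonal d * Wᵀ)ᵀ * (W * diagonal d * Wᵀ))
      = ∑ i, ∑ j, d i * d j * (Wᵀ * W) i j ^ 2 := by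
  have e : (W * diagonal d * Wᵀ)ᵀ * (W * diagonal d * Wᵀ)
      = W * (diagonal d * (Wᵀ * W) * diagonal d) * Wᵀ := by
    simp only [transpose_mul, transpose_transpose, diagonal_transpose, Matrix.mul_assoc]
  have ha := isSymm_transpose_mul_self W
  rw [e, trace_mul_cycle, ← Matrix.mul_assoc]
  generalize Wᵀ * W = a at ha ⊢
  refine sum_congr rfl fun i _ => ?_
  rw [diag_apply, mul_diagonal, ← Matrix.mul_assoc, ha.mul_diagonal_mul_self_apply, sum_mul]
  exact sum_congr rfl fun j _ => by ring

theorem Matrix.sum_mul_sq_le_of_mul_diagonal_mul_transpose_le {W : Matrix ι ι ℝ} {p : ι → ℝ}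
    {l : ℝ} (h : W * diagonal p * Wᵀ ≤ l • 1) (i : ι) :
    ∑ j, p j * (Wᵀ * W) i j ^ 2 ≤ l * (Wᵀ * W) i i := by
  have hpsd := (Matrix.le_iff.mp h).conjTranspose_mul_mul_same W
  have e : Wᴴ * (l • 1 - W * diagonal p * Wᵀ) * W
      = l • (Wᵀ * W) - (Wᵀ * W) * diagonal p * (Wᵀ * W) := by
    simp only [conjTranspose_eq_transpose_of_trivial, Matrix.mul_sub, Matrix.sub_mul,
      Matrix.mul_smul, Matrix.smul_mul, Matrix.mul_one, Matrix.mul_assoc]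
  rw [e] at hpsd
  have := hpsd.diag_nonneg (i := i)
  rw [sub_apply, smul_apply, smul_eq_mul,
    (isSymm_transpose_mul_self W).mul_diagonal_mul_self_apply] at this
  linarith

theorem Matrix.trace_sq_sub_le_of_mul_diagonal_mul_transpose_le (W : Matrix ι ι ℝ)
    (μ : ι → ℝ) {p : ι → ℝ} (hp : ∀ i, 0 < p i) {l : ℝ} (h : W * diagonal p * Wᵀ ≤ l • 1) :
    trace ((W * Wᵀ - W * diagonal μ * Wᵀ)ᵀ * (W * Wᵀ - W * diagonal μ * Wᵀ))
      ≤ l ^ 2 * ∑ i, ((1 - μ i) / p i) ^ 2 := by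
  rw [sub_mul_diagonal_mul_transpose, trace_sq_mul_diagonal_mul_transpose]
  exact (isSymm_transpose_mul_self W).sum_mul_mul_sq_le hp
    (sum_mul_sq_le_of_mul_diagonal_mul_transpose_le h) _

end

theorem stmt0 {n : ℕ} (A B : Matrix (Fin n) (Fin n) ℝ)
    (hA : A.PosDef) (hB : B.PosDef)
    (lamA lamB : ℝ)
    (hlA : IsGreatest (Set.range hA.1.eigenvalues) lamA)
    (hlB : IsGreatest (Set.range hB.1.eigenvalues) lamB)
    (t : ℝ) (ht : t ∈ Set.Icc (0:ℝ) 1) :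
    (1 - t) * Real.log A.det + t * Real.log B.det +
      (1/2) * t * (1 - t) * (1 / max (lamA^2) (lamB^2)) *
        Matrix.trace ((A - B)ᵀ * (A - B))
      ≤ Real.log ((1 - t) • A + t • B).det := by
  obtain ⟨W, μ, hμ, hAW, hBW⟩ := hA.exists_simultaneous_diagonalization hB
  set l := max lamA lamB
  have hAl : A ≤ l • 1 := hA.1.le_smul_one_of_eigenvalues_le fun i =>
    (hlA.2 (mem_range_self i)).trans (le_max_left _ _)
  have hBl : B ≤ l • 1 := hB.1.le_smul_one_of_eigenvalues_le fun i =>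
    (hlB.2 (mem_range_self i)).trans (le_max_right _ _)
  have hsq : max (lamA ^ 2) (lamB ^ 2) = l ^ 2 := by
    obtain ⟨iA, rfl⟩ := hlA.1
    obtain ⟨iB, rfl⟩ := hlB.1
    exact (pow_left_monotoneOn.map_max (hA.eigenvalues_pos iA).le (hB.eigenvalues_pos iB).le).symm
  have hc : ∀ s ∈ Ioo (0:ℝ) 1, trace ((A - B)ᵀ * (A - B)) / l ^ 2
      ≤ ∑ i, ((1 - μ i) / (1 - s + s * μ i)) ^ 2 := fun s hs => by
    have hP := smul_add_smul_le_smul_one hAl hBl (Ioo_subset_Icc_self hs)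
    rw [hAW, hBW, smul_add_smul_mul_diagonal_mul_transpose] at hP
    refine div_le_of_le_mul₀ (sq_nonneg l) (by positivity) ?_
    rw [hAW, hBW, mul_comm]
    exact trace_sq_sub_le_of_mul_diagonal_mul_transpose_le W μ
      (fun i => one_sub_add_mul_pos (Ioo_subset_Icc_self hs) (hμ i)) hP
  have hlog : ∀ s ∈ Icc (0:ℝ) 1,
      log ((1 - s) • A + s • B).det = log A.det + ∑ i, log (1 - s + s * μ i) := fun s hs => by
    rw [hAW, hBW, smul_add_smul_mul_diagonal_mul_transpose,
      log_det_mul_diagonal_mul_transpose (hAW ▸ hA.det_pos.ne')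
        fun i => (one_sub_add_mul_pos hs (hμ i)).ne']
  have hlogB := hlog 1 (right_mem_Icc.2 zero_le_one)
  simp only [sub_self, zero_smul, one_smul, zero_add, one_mul] at hlogB
  have key := mul_sum_log_add_le_sum_log hμ hc ht
  rw [hlog t ht, hlogB, hsq]
  linear_combination key
end

section
/- Let h : R → R be differentiable with h² = f(g − α) where f, g are strictly increasing differentiable functions, f(x₀) = 0 and α = g(x₀), and h ≥ 0. Then (h')² ≥ f' g' pointwise wherever h > 0. -/
lemma two_mul_mul_deriv_eq_of_sq_eq_mul {F G h : ℝ → ℝ} {x : ℝ}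
    (hF : DifferentiableAt ℝ F x) (hG : DifferentiableAt ℝ G x) (hh : DifferentiableAt ℝ h x)
    (hsq : ∀ y, h y ^ 2 = F y * G y) :
    2 * h x * deriv h x = deriv F x * G x + F x * deriv G x := by
  have hfun : h ^ 2 = F * G := funext hsq
  have hderiv := hh.hasDerivAt.pow 2
  rw [hfun] at hderiv
  simpa using hderiv.unique (hF.hasDerivAt.mul hG.hasDerivAt)

/-- AM–GM applied to the two terms of `(F G)' = F' G + F G'`, whose product is `F' G' h²`. -/
lemma deriv_mul_deriv_le_sq_deriv_of_sq_eq_mul {F G h : ℝ → ℝ} {x : ℝ}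
    (hF : DifferentiableAt ℝ F x) (hG : DifferentiableAt ℝ G x) (hh : DifferentiableAt ℝ h x)
    (hsq : ∀ y, h y ^ 2 = F y * G y) (hx : h x ≠ 0) :
    deriv F x * deriv G x ≤ deriv h x ^ 2 := by
  have hsum := two_mul_mul_deriv_eq_of_sq_eq_mul hF hG hh hsq
  refine le_of_mul_le_mul_right ?_ (by positivity : 0 < (2 * h x) ^ 2)
  calc deriv F x * deriv G x * (2 * h x) ^ 2
      = 4 * (deriv F x * G x) * (F x * deriv G x) := by rw [mul_pow, hsq x]; ring
    _ ≤ (deriv F x * G x + F x * deriv G x) ^ 2 := four_mul_le_sq_add _ _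
    _ = deriv h x ^ 2 * (2 * h x) ^ 2 := by rw [← hsum]; ring

theorem stmt10_general (f g h : ℝ → ℝ) (x₀ : ℝ)
    (hfd : Differentiable ℝ f) (hgd : Differentiable ℝ g) (hhd : Differentiable ℝ h)
    (hsq : ∀ x, (h x) ^ 2 = f x * (g x - g x₀)) :
    ∀ x, 0 < h x → deriv f x * deriv g x ≤ (deriv h x) ^ 2 := by
  intro x hx
  have hle := deriv_mul_deriv_le_sq_deriv_of_sq_eq_mul (hfd x) ((hgd x).sub_const (g x₀))
    (hhd x) hsq hx.ne'
  rwa [deriv_sub_const] at hle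

theorem stmt10 (f g h : ℝ → ℝ) (x₀ : ℝ)
    (hf : StrictMono f) (hg : StrictMono g)
    (hfd : Differentiable ℝ f) (hgd : Differentiable ℝ g) (hhd : Differentiable ℝ h)
    (hfx₀ : f x₀ = 0)
    (hpos : ∀ x, 0 ≤ h x)
    (hsq : ∀ x, (h x) ^ 2 = f x * (g x - g x₀)) :
    ∀ x, 0 < h x → deriv f x * deriv g x ≤ (deriv h x) ^ 2 :=
  stmt10_general f g h x₀ hfd hgd hhd hsq
end

section
/- Let μ, ν be probability measures on R with finite second moment, and let γ₁ be the standard Gaussian. Let T₁, T₂ be the (increasing) optimal transport maps from γ₁ to μ and ν respectively. Then Ent_{γ₁}(μ) + Ent_{γ₁}(ν) − (1/2) W₂²(μ, ν) = −∫ log(T₁' T₂') dγ₁ + ∫ T₁ T₂ dγ₁ − 1, assuming μ, ν are absolutely continuous with smooth positive densities and the Monge–Ampère equation holds. -/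
open MeasureTheory ProbabilityTheory Real
open scoped ENNReal

/-- Relative entropy `Ent_m(μ) = ∫ log (dμ/dm) dμ`. -/
noncomputable def relEnt {E : Type*} [MeasurableSpace E] (m μ : Measure E) : ℝ :=
  ∫ x, Real.log ((μ.rnDeriv m x).toReal) ∂μ

/-- The squared L²-Wasserstein distance. -/
noncomputable def W2sq {E : Type*} [MeasurableSpace E] [NormedAddCommGroup E]
    (μ ν : Measure E) : ℝ :=
  (sInf {r : ℝ≥0∞ | ∃ P : Measure (E × E), P.map Prod.fst = μ ∧ P.map Prod.snd = ν ∧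
    r = ∫⁻ p, ENNReal.ofReal (‖p.1 - p.2‖ ^ 2) ∂P}).toReal

section Aux

lemma aux_phi_eq (x : ℝ) :
    gaussianPDFReal 0 1 x = Real.exp (-x ^ 2 / 2) / Real.sqrt (2 * π) := by
  simp only [gaussianPDFReal, NNReal.coe_one, mul_one, sub_zero]
  rw [div_eq_mul_inv, mul_comm]
  rw [Real.sqrt_mul (by norm_num) π, mul_inv]
  ring_nf

lemma aux_phi_pos (x : ℝ) : 0 < gaussianPDFReal 0 1 x :=
  gaussianPDFReal_pos 0 1 x one_ne_zero

lemma aux_phi_cont : Continuous (gaussianPDFReal 0 1) := by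
  rw [gaussianPDFReal_def]
  fun_prop

lemma aux_withDensity (ρ : ℝ → ℝ) (hcont : Continuous ρ)
    (μ : Measure ℝ) (hμ : μ = volume.withDensity (fun x => ENNReal.ofReal (ρ x))) :
    μ = (gaussianReal 0 1).withDensity
      (fun x => ENNReal.ofReal (ρ x / gaussianPDFReal 0 1 x)) := by
  rw [gaussianReal_of_var_ne_zero 0 one_ne_zero]
  rw [← withDensity_mul _ (measurable_gaussianPDF 0 1)
    (by exact (hcont.measurable.div (measurable_gaussianPDFReal 0 1)).ennreal_ofReal)]
  rw [hμ]
  congr 1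
  funext x
  simp only [Pi.mul_apply, gaussianPDF_def]
  rw [← ENNReal.ofReal_mul (gaussianPDFReal_nonneg 0 1 x),
    mul_div_cancel₀ _ (aux_phi_pos x).ne']

lemma aux_rnDeriv (ρ : ℝ → ℝ) (hcont : Continuous ρ)
    (μ : Measure ℝ) (hμ : μ = volume.withDensity (fun x => ENNReal.ofReal (ρ x))) :
    μ.rnDeriv (gaussianReal 0 1) =ᵐ[gaussianReal 0 1]
      fun x => ENNReal.ofReal (ρ x / gaussianPDFReal 0 1 x) := by
  rw [aux_withDensity ρ hcont μ hμ]
  exact Measure.rnDeriv_withDensity _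
    ((hcont.measurable.div (measurable_gaussianPDFReal 0 1)).ennreal_ofReal)

lemma aux_log_phi (y : ℝ) :
    Real.log (gaussianPDFReal 0 1 y) = -y ^ 2 / 2 - Real.log (Real.sqrt (2 * π)) := by
  rw [aux_phi_eq, Real.log_div (Real.exp_pos _).ne' (by positivity), Real.log_exp]

lemma aux_deriv_pos (ρ : ℝ → ℝ) (hpos : ∀ x, 0 < ρ x) (T : ℝ → ℝ)
    (hMA : ∀ x, Real.exp (-x ^ 2 / 2) / Real.sqrt (2 * π) = ρ (T x) * deriv T x)
    (x : ℝ) : 0 < deriv T x := by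
  have h := hMA x
  have h1 : 0 < Real.exp (-x ^ 2 / 2) / Real.sqrt (2 * π) := by positivity
  rw [h] at h1
  rcases mul_pos_iff.mp h1 with ⟨_, h⟩ | ⟨h, _⟩
  · exact h
  · exact absurd (hpos (T x)) (not_lt.mpr h.le)

lemma aux_relEnt (μ : Measure ℝ) [IsProbabilityMeasure μ] (ρ : ℝ → ℝ) (hcont : Continuous ρ)
    (hpos : ∀ x, 0 < ρ x) (hμ : μ = volume.withDensity (fun x => ENNReal.ofReal (ρ x)))
    (T : ℝ → ℝ) (hTd : Differentiable ℝ T)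
    (hpush : (gaussianReal 0 1).map T = μ)
    (hMA : ∀ x, Real.exp (-x ^ 2 / 2) / Real.sqrt (2 * π) = ρ (T x) * deriv T x)
    (h4 : Integrable (fun x => Real.log ((μ.rnDeriv (gaussianReal 0 1) x).toReal)) μ) :
    (∫ x, Real.log ((μ.rnDeriv (gaussianReal 0 1) x).toReal) ∂μ =
      ∫ x, (-x ^ 2 / 2 - Real.log (deriv T x) + (T x) ^ 2 / 2) ∂(gaussianReal 0 1)) ∧
    Integrable (fun x => -x ^ 2 / 2 - Real.log (deriv T x) + (T x) ^ 2 / 2)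
      (gaussianReal 0 1) := by
  set γ := gaussianReal 0 1 with hγ
  have hac : μ ≪ γ := by
    refine (hμ ▸ withDensity_absolutelyContinuous volume _).trans ?_
    rw [hγ, gaussianReal_of_var_ne_zero 0 one_ne_zero]
    refine withDensity_absolutelyContinuous' (measurable_gaussianPDF 0 1).aemeasurable ?_
    filter_upwards with x
    exact (gaussianPDF_pos 0 one_ne_zero x).ne'
  have hrnμ : (fun x => Real.log ((μ.rnDeriv γ x).toReal)) =ᵐ[μ]
      fun x => Real.log (ρ x / gaussianPDFReal 0 1 x) := by
    filter_upwards [hac.ae_le (aux_rnDeriv ρ hcont μ hμ)] with x hx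
    rw [hx, ENNReal.toReal_ofReal (div_nonneg (hpos x).le (aux_phi_pos x).le)]
  have hf_cont : Continuous fun y => Real.log (ρ y / gaussianPDFReal 0 1 y) :=
    (hcont.div aux_phi_cont fun y => (aux_phi_pos y).ne').log
      fun y => (div_pos (hpos y) (aux_phi_pos y)).ne'
  have hTm : Measurable T := hTd.continuous.measurable
  have hint : Integrable (fun y => Real.log (ρ y / gaussianPDFReal 0 1 y)) μ := h4.congr hrnμ
  have hcv : ∫ y, Real.log (ρ y / gaussianPDFReal 0 1 y) ∂μ =
      ∫ x, Real.log (ρ (T x) / gaussianPDFReal 0 1 (T x)) ∂γ := by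
    rw [← hpush, integral_map hTm.aemeasurable hf_cont.aestronglyMeasurable]
  have hint2 : Integrable (fun x => Real.log (ρ (T x) / gaussianPDFReal 0 1 (T x))) γ := by
    have := (integrable_map_measure hf_cont.aestronglyMeasurable hTm.aemeasurable).mp
      (hpush ▸ hint)
    exact this
  have hpt : ∀ x, Real.log (ρ (T x) / gaussianPDFReal 0 1 (T x)) =
      -x ^ 2 / 2 - Real.log (deriv T x) + (T x) ^ 2 / 2 := by
    intro x
    have hd := aux_deriv_pos ρ hpos T hMA x
    have hρT : ρ (T x) = Real.exp (-x ^ 2 / 2) / Real.sqrt (2 * π) / deriv T x := by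
      rw [eq_div_iff hd.ne']
      exact (hMA x).symm
    rw [Real.log_div (hpos (T x)).ne' (aux_phi_pos (T x)).ne', hρT,
      Real.log_div (by positivity) hd.ne',
      Real.log_div (Real.exp_pos _).ne' (by positivity), Real.log_exp, aux_log_phi]
    ring
  refine ⟨?_, hint2.congr (Filter.Eventually.of_forall fun x => hpt x)⟩
  rw [integral_congr_ae hrnμ, hcv]
  exact integral_congr_ae (Filter.Eventually.of_forall fun x => hpt x)

lemma int_sq_exp : Integrable (fun x : ℝ => x ^ 2 * Real.exp (-(1/2) * x ^ 2)) := by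
  have := integrable_rpow_mul_exp_neg_mul_sq (b := 1/2) (by norm_num) (s := 2) (by norm_num)
  simpa [Real.rpow_two] using this

lemma aux_second_moment : ∫ x : ℝ, x ^ 2 * Real.exp (-(1/2) * x ^ 2) = Real.sqrt (2 * π) := by
  have hu : ∀ x : ℝ, HasDerivAt (fun y : ℝ => y) 1 x := fun x => hasDerivAt_id x
  have hv : ∀ x : ℝ, HasDerivAt (fun y : ℝ => -Real.exp (-(1/2) * y ^ 2))
      (x * Real.exp (-(1/2) * x ^ 2)) x := by
    intro x
    have h1 : HasDerivAt (fun y : ℝ => -(1/2) * y ^ 2) (-(1/2) * (2 * x)) x :=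
      ((hasDerivAt_pow 2 x).const_mul _).congr_deriv (by ring)
    have h2 := (h1.exp).neg
    refine h2.congr_deriv ?_
    ring
  have huv' : Integrable ((fun y : ℝ => y) * fun x => x * Real.exp (-(1/2) * x ^ 2)) := by
    have := int_sq_exp
    apply this.congr
    filter_upwards with x
    simp [Pi.mul_apply]; ring
  have hu'v : Integrable ((fun _ : ℝ => (1:ℝ)) * fun y : ℝ => -Real.exp (-(1/2) * y ^ 2)) := by
    have := integrable_exp_neg_mul_sq (b := (1/2:ℝ)) (by norm_num)
    apply this.neg.congr
    filter_upwards with x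
    simp [Pi.mul_apply]
  have huv : Integrable ((fun y : ℝ => y) * fun y : ℝ => -Real.exp (-(1/2) * y ^ 2)) := by
    have := integrable_mul_exp_neg_mul_sq (b := (1/2:ℝ)) (by norm_num)
    apply this.neg.congr
    filter_upwards with x
    simp [Pi.mul_apply]
  have key := MeasureTheory.integral_mul_deriv_eq_deriv_mul_of_integrable (fun x _ => hu x) (fun x _ => hv x) huv' hu'v huv
  have hgauss : ∫ x : ℝ, Real.exp (-(1/2) * x ^ 2) = Real.sqrt (2 * π) := by
    rw [integral_gaussian]
    norm_num
    ring
  calc ∫ x : ℝ, x ^ 2 * Real.exp (-(1/2) * x ^ 2)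
      = ∫ x : ℝ, x * (x * Real.exp (-(1/2) * x ^ 2)) := by
        congr 1; funext x; ring
    _ = -∫ x : ℝ, 1 * (-Real.exp (-(1/2) * x ^ 2)) := key
    _ = ∫ x : ℝ, Real.exp (-(1/2) * x ^ 2) := by
        rw [← integral_neg]; congr 1; funext x; ring
    _ = Real.sqrt (2 * π) := hgauss

lemma aux_sq_phi (x : ℝ) :
    x ^ 2 * gaussianPDFReal 0 1 x
      = (Real.sqrt (2 * π))⁻¹ * (x ^ 2 * Real.exp (-(1/2) * x ^ 2)) := by
  rw [aux_phi_eq]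
  have : -x ^ 2 / 2 = -(1/2) * x ^ 2 := by ring
  rw [this]
  ring

lemma aux_gamma_sq_int : Integrable (fun x : ℝ => x ^ 2) (gaussianReal 0 1) := by
  rw [gaussianReal_of_var_ne_zero 0 one_ne_zero,
    integrable_withDensity_iff (measurable_gaussianPDF 0 1)
      (Filter.Eventually.of_forall fun x => ENNReal.ofReal_lt_top)]
  have : (fun x : ℝ => x ^ 2 * (gaussianPDF 0 1 x).toReal)
      = fun x : ℝ => (Real.sqrt (2 * π))⁻¹ * (x ^ 2 * Real.exp (-(1/2) * x ^ 2)) := by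
    funext x
    rw [gaussianPDF_def, ENNReal.toReal_ofReal (gaussianPDFReal_nonneg 0 1 x), aux_sq_phi]
  rw [this]
  exact int_sq_exp.const_mul _

lemma aux_gamma_sq : ∫ x, x ^ 2 ∂(gaussianReal 0 1) = 1 := by
  have hγ : gaussianReal 0 1 = volume.withDensity
      (fun x => ((gaussianPDFReal 0 1 x).toNNReal : ℝ≥0∞)) := by
    rw [gaussianReal_of_var_ne_zero 0 one_ne_zero]
    rfl
  rw [hγ, integral_withDensity_eq_integral_smul
    ((measurable_gaussianPDFReal 0 1).real_toNNReal)]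
  have : (fun x : ℝ => (gaussianPDFReal 0 1 x).toNNReal • x ^ 2)
      = fun x : ℝ => (Real.sqrt (2 * π))⁻¹ * (x ^ 2 * Real.exp (-(1/2) * x ^ 2)) := by
    funext x
    rw [NNReal.smul_def, smul_eq_mul, Real.coe_toNNReal _ (gaussianPDFReal_nonneg 0 1 x),
      mul_comm, aux_sq_phi]
  rw [this, integral_const_mul, aux_second_moment,
    inv_mul_cancel₀ (Real.sqrt_pos.mpr (by positivity)).ne']

end Aux

theorem stmt11 (μ ν : Measure ℝ) [IsProbabilityMeasure μ] [IsProbabilityMeasure ν]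
    (ρμ ρν : ℝ → ℝ) (hρμ : ContDiff ℝ (⊤ : ℕ∞) ρμ) (hρν : ContDiff ℝ (⊤ : ℕ∞) ρν)
    (hρμpos : ∀ x, 0 < ρμ x) (hρνpos : ∀ x, 0 < ρν x)
    (hμ : μ = volume.withDensity (fun x => ENNReal.ofReal (ρμ x)))
    (hν : ν = volume.withDensity (fun x => ENNReal.ofReal (ρν x)))
    (hμ2 : Integrable (fun x => x ^ 2) μ) (hν2 : Integrable (fun x => x ^ 2) ν)
    (T₁ T₂ : ℝ → ℝ) (hT₁ : StrictMono T₁) (hT₂ : StrictMono T₂)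
    (hT₁d : Differentiable ℝ T₁) (hT₂d : Differentiable ℝ T₂)
    -- `T₁, T₂` push the standard Gaussian forward to `μ`, `ν`
    (hpush₁ : (gaussianReal 0 1).map T₁ = μ) (hpush₂ : (gaussianReal 0 1).map T₂ = ν)
    -- the Monge–Ampère equations
    (hMA₁ : ∀ x, Real.exp (-x ^ 2 / 2) / Real.sqrt (2 * π) = ρμ (T₁ x) * deriv T₁ x)
    (hMA₂ : ∀ x, Real.exp (-x ^ 2 / 2) / Real.sqrt (2 * π) = ρν (T₂ x) * deriv T₂ x)
    -- on the real line the Wasserstein distance is realized by (T₁, T₂)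
    (hW : W2sq μ ν = ∫ x, (T₁ x - T₂ x) ^ 2 ∂(gaussianReal 0 1))
    -- integrability of the terms involved
    (h1 : Integrable (fun x => Real.log (deriv T₁ x * deriv T₂ x)) (gaussianReal 0 1))
    (h2 : Integrable (fun x => T₁ x * T₂ x) (gaussianReal 0 1))
    (h3 : Integrable (fun x => (T₁ x - T₂ x) ^ 2) (gaussianReal 0 1))
    (h4 : Integrable (fun x => Real.log ((μ.rnDeriv (gaussianReal 0 1) x).toReal)) μ)
    (h5 : Integrable (fun x => Real.log ((ν.rnDeriv (gaussianReal 0 1) x).toReal)) ν) :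
    relEnt (gaussianReal 0 1) μ + relEnt (gaussianReal 0 1) ν - (1 / 2) * W2sq μ ν =
      -∫ x, Real.log (deriv T₁ x * deriv T₂ x) ∂(gaussianReal 0 1)
        + ∫ x, T₁ x * T₂ x ∂(gaussianReal 0 1) - 1 := by
  set γ := gaussianReal 0 1 with hγ
  obtain ⟨e₁, i₁⟩ := aux_relEnt μ ρμ hρμ.continuous hρμpos hμ T₁ hT₁d hpush₁ hMA₁ h4
  obtain ⟨e₂, i₂⟩ := aux_relEnt ν ρν hρν.continuous hρνpos hν T₂ hT₂d hpush₂ hMA₂ h5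
  have hd₁ := aux_deriv_pos ρμ hρμpos T₁ hMA₁
  have hd₂ := aux_deriv_pos ρν hρνpos T₂ hMA₂
  have hre₁ : relEnt γ μ = ∫ x, (-x ^ 2 / 2 - Real.log (deriv T₁ x) + (T₁ x) ^ 2 / 2) ∂γ := e₁
  have hre₂ : relEnt γ ν = ∫ x, (-x ^ 2 / 2 - Real.log (deriv T₂ x) + (T₂ x) ^ 2 / 2) ∂γ := e₂
  -- combine
  have hsum : relEnt γ μ + relEnt γ ν - (1/2) * W2sq μ ν =
      ∫ x, ((-x ^ 2 / 2 - Real.log (deriv T₁ x) + (T₁ x) ^ 2 / 2)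
        + (-x ^ 2 / 2 - Real.log (deriv T₂ x) + (T₂ x) ^ 2 / 2)
        - (1/2) * (T₁ x - T₂ x) ^ 2) ∂γ := by
    rw [hre₁, hre₂, hW]
    have J₁ : Integrable (fun x : ℝ => (-x ^ 2 / 2 - Real.log (deriv T₁ x) + (T₁ x) ^ 2 / 2)
        + (-x ^ 2 / 2 - Real.log (deriv T₂ x) + (T₂ x) ^ 2 / 2)) γ := i₁.add i₂
    rw [integral_sub J₁ (h3.const_mul (1/2)), integral_add i₁ i₂, integral_const_mul]
  rw [hsum]
  have hpt : ∀ x : ℝ, (-x ^ 2 / 2 - Real.log (deriv T₁ x) + (T₁ x) ^ 2 / 2)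
        + (-x ^ 2 / 2 - Real.log (deriv T₂ x) + (T₂ x) ^ 2 / 2)
        - (1/2) * (T₁ x - T₂ x) ^ 2
      = -(x ^ 2) - Real.log (deriv T₁ x * deriv T₂ x) + T₁ x * T₂ x := by
    intro x
    rw [Real.log_mul (hd₁ x).ne' (hd₂ x).ne']
    ring
  rw [integral_congr_ae (Filter.Eventually.of_forall hpt)]
  have hsplit : ∫ x, (-(x ^ 2) - Real.log (deriv T₁ x * deriv T₂ x) + T₁ x * T₂ x) ∂γ
      = -(∫ x, x ^ 2 ∂γ) - (∫ x, Real.log (deriv T₁ x * deriv T₂ x) ∂γ)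
        + ∫ x, T₁ x * T₂ x ∂γ := by
    have K : Integrable (fun x : ℝ => -(x ^ 2) - Real.log (deriv T₁ x * deriv T₂ x)) γ :=
      aux_gamma_sq_int.neg.sub h1
    have N : Integrable (fun x : ℝ => -(x ^ 2)) γ := aux_gamma_sq_int.neg
    rw [integral_add K h2, integral_sub N h1, integral_neg]
  rw [hsplit, hγ, aux_gamma_sq]
  ring
end
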